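/- arXiv:math-ph/0601011 — 9 statements merged into one kernel-verified Lean document; each statement's English description precedes it below -/
import Mathlib

section
/- Let M be a nonempty set and 𝔄(M) a σ-algebra of subsets of M. For every spectral family E : ℝ → 𝔄(M) (i.e., E is monotone, right-continuous in the sense E_λ = ⋂_{μ>λ} E_μ, with ⋂_λ E_λ = ∅ and ⋃_λ E_λ = M), the function f_E : M → ℝ defined by f_E(x) := inf { λ ∈ ℝ | x ∈ E_λ } satisfies f_E⁻¹((-∞, λ]) = E_λ for all λ ∈ ℝ. -/
/-- For a spectral family `E : ℝ → 𝔄(M)` in a σ-algebra of subsets of a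
nonempty set `M`, the induced function `f_E x = inf {λ | x ∈ E λ}` satisfies
`f_E⁻¹((-∞, λ]) = E λ` for all `λ`. -/
theorem spectral_family_preimage_Iic
    {M : Type*} [MeasurableSpace M] [Nonempty M] (E : ℝ → Set M)
    (hmeas : ∀ l : ℝ, MeasurableSet (E l))
    (hmono : Monotone E)
    (hright : ∀ l : ℝ, E l = ⋂ μ ∈ Set.Ioi l, E μ)
    (hbot : (⋂ l : ℝ, E l) = ∅)
    (htop : (⋃ l : ℝ, E l) = Set.univ) :
    ∀ l : ℝ, (fun x => sInf {μ : ℝ | x ∈ E μ}) ⁻¹' Set.Iic l = E l := by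
  intro l
  ext x
  set S : Set ℝ := {μ : ℝ | x ∈ E μ} with hS
  have hne : S.Nonempty := by
    have : x ∈ ⋃ l : ℝ, E l := by rw [htop]; trivial
    rcases Set.mem_iUnion.1 this with ⟨μ, hμ⟩
    exact ⟨μ, hμ⟩
  have hbdd : BddBelow S := by
    by_contra h
    have hall : ∀ μ : ℝ, x ∈ E μ := by
      intro μ
      rcases not_bddBelow_iff.1 h μ with ⟨s, hs, hsμ⟩
      exact hmono hsμ.le hs
    have : x ∈ ⋂ l : ℝ, E l := Set.mem_iInter.2 hall
    rw [hbot] at this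
    exact this
  simp only [Set.mem_preimage, Set.mem_Iic]
  constructor
  · intro hinf
    rw [hright l]
    refine Set.mem_iInter₂.2 fun μ hμ => ?_
    have : sInf S < μ := lt_of_le_of_lt hinf hμ
    rcases exists_lt_of_csInf_lt hne this with ⟨s, hs, hsμ⟩
    exact hmono hsμ.le hs
  · intro hx
    exact csInf_le hbdd hx
end

section
/- Let M be a nonempty set and 𝔄(M) a σ-algebra of subsets of M. The function f_E : M → ℝ induced by any spectral family E : ℝ → 𝔄(M) is 𝔄(M)-measurable (with respect to the Borel σ-algebra on ℝ). -/
open Set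

section SpectralFamily

variable {M α : Type*} {E : α → Set M}

theorem nonempty_setOf_mem_of_iUnion_eq_univ (htop : (⋃ l, E l) = univ) (x : M) :
    {μ | x ∈ E μ}.Nonempty :=
  mem_iUnion.mp (htop ▸ mem_univ x)

theorem bddBelow_setOf_mem_of_iInter_eq_empty [LinearOrder α] (hmono : Monotone E)
    (hbot : (⋂ l, E l) = ∅) (x : M) : BddBelow {μ | x ∈ E μ} := by
  obtain ⟨l, hl⟩ : ∃ l, x ∉ E l := by
    simpa only [mem_iInter, not_forall] using (hbot.symm ▸ notMem_empty x : x ∉ ⋂ l, E l)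
  exact ⟨l, fun ν hν => le_of_not_gt fun hνl => hl (hmono hνl.le hν)⟩

/-- Right continuity of `E` is what makes the infimum attained, so that `E l` is a full
sublevel set. -/
theorem preimage_Iic_sInf_setOf_mem [ConditionallyCompleteLinearOrder α] (hmono : Monotone E)
    (hright : ∀ l, E l = ⋂ μ ∈ Ioi l, E μ) (hbot : (⋂ l, E l) = ∅) (htop : (⋃ l, E l) = univ)
    (l : α) : (fun x => sInf {μ | x ∈ E μ}) ⁻¹' Iic l = E l := by
  ext x
  have hne := nonempty_setOf_mem_of_iUnion_eq_univ htop x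
  have hbdd := bddBelow_setOf_mem_of_iInter_eq_empty hmono hbot x
  refine ⟨fun hle => ?_, fun hx => csInf_le hbdd hx⟩
  rw [hright l, mem_iInter₂]
  intro μ hμ
  obtain ⟨ν, hν, hνμ⟩ := (csInf_lt_iff hbdd hne).mp (lt_of_le_of_lt hle hμ)
  exact hmono hνμ.le hν

end SpectralFamily

theorem spectral_family_induced_function_measurable_general
    {M : Type*} [MeasurableSpace M] (E : ℝ → Set M)
    (hmeas : ∀ l : ℝ, MeasurableSet (E l))
    (hmono : Monotone E)
    (hright : ∀ l : ℝ, E l = ⋂ μ ∈ Set.Ioi l, E μ)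
    (hbot : (⋂ l : ℝ, E l) = ∅)
    (htop : (⋃ l : ℝ, E l) = Set.univ) :
    Measurable (fun x => sInf {μ : ℝ | x ∈ E μ}) :=
  measurable_of_Iic fun l => preimage_Iic_sInf_setOf_mem hmono hright hbot htop l ▸ hmeas l

/-- The function induced by a spectral family in a σ-algebra of subsets
of a nonempty set `M` is measurable. -/
theorem spectral_family_induced_function_measurable
    {M : Type*} [MeasurableSpace M] [Nonempty M] (E : ℝ → Set M)
    (hmeas : ∀ l : ℝ, MeasurableSet (E l))
    (hmono : Monotone E)
    (hright : ∀ l : ℝ, E l = ⋂ μ ∈ Set.Ioi l, E μ)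
    (hbot : (⋂ l : ℝ, E l) = ∅)
    (htop : (⋃ l : ℝ, E l) = Set.univ) :
    Measurable (fun x => sInf {μ : ℝ | x ∈ E μ}) :=
  spectral_family_induced_function_measurable_general E hmeas hmono hright hbot htop
end

section
/- Let M be a nonempty set and 𝔄(M) a σ-algebra of subsets of M. The assignments f ↦ E^f, where E^f_λ := f⁻¹((-∞, λ]), and E ↦ f_E, where f_E(x) := inf { λ | x ∈ E_λ }, are mutually inverse bijections between the set of 𝔄(M)-measurable functions M → ℝ and the set of spectral families in 𝔄(M); in particular f_{E^f} = f and E^{f_E} = E. -/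
/-- `f ↦ E^f` with `E^f_λ = f⁻¹((-∞,λ])` and `E ↦ f_E` with
`f_E x = inf {λ | x ∈ E λ}` are mutually inverse bijections between measurable
functions `M → ℝ` and spectral families in the σ-algebra of `M`; in particular
`f_{E^f} = f` and `E^{f_E} = E`. -/
theorem spectral_families_biject_with_measurable_functions
    {M : Type*} [MeasurableSpace M] [Nonempty M] :
    (∀ f : M → ℝ, Measurable f →
      -- E^f is a spectral family
      ((∀ l : ℝ, MeasurableSet (f ⁻¹' Set.Iic l)) ∧
       Monotone (fun l : ℝ => f ⁻¹' Set.Iic l) ∧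
       (∀ l : ℝ, f ⁻¹' Set.Iic l = ⋂ μ ∈ Set.Ioi l, f ⁻¹' Set.Iic μ) ∧
       (⋂ l : ℝ, f ⁻¹' Set.Iic l) = ∅ ∧
       (⋃ l : ℝ, f ⁻¹' Set.Iic l) = Set.univ) ∧
      -- f_{E^f} = f
      (∀ x : M, sInf {l : ℝ | x ∈ f ⁻¹' Set.Iic l} = f x)) ∧
    (∀ E : ℝ → Set M,
      (∀ l : ℝ, MeasurableSet (E l)) →
      Monotone E →
      (∀ l : ℝ, E l = ⋂ μ ∈ Set.Ioi l, E μ) →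
      (⋂ l : ℝ, E l) = ∅ →
      (⋃ l : ℝ, E l) = Set.univ →
      -- f_E is measurable and E^{f_E} = E
      Measurable (fun x => sInf {μ : ℝ | x ∈ E μ}) ∧
      ∀ l : ℝ, (fun x => sInf {μ : ℝ | x ∈ E μ}) ⁻¹' Set.Iic l = E l) := by

  constructor
  · intro f hf
    refine ⟨⟨fun l => hf measurableSet_Iic, ?_, ?_, ?_, ?_⟩, ?_⟩
    · intro a b hab x hx
      exact le_trans hx hab
    · intro l
      ext x
      simp only [Set.mem_preimage, Set.mem_Iic, Set.mem_iInter, Set.mem_Ioi]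
      constructor
      · intro h μ hμ; exact h.trans hμ.le
      · intro h; exact le_of_forall_gt_imp_ge_of_dense h
    · ext x
      simp only [Set.mem_iInter, Set.mem_preimage, Set.mem_Iic, Set.mem_empty_iff_false, iff_false]
      push_neg
      exact ⟨f x - 1, by linarith⟩
    · ext x
      simp only [Set.mem_iUnion, Set.mem_preimage, Set.mem_Iic, Set.mem_univ, iff_true]
      exact ⟨f x, le_rfl⟩
    · intro x
      have : {l : ℝ | x ∈ f ⁻¹' Set.Iic l} = Set.Ici (f x) := by
        ext l; simp [Set.mem_Ici, Set.mem_Iic]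
      rw [this, csInf_Ici]
  · intro E hmeas hmono hrc hinter hunion
    -- key: x ∈ E l ↔ sInf {μ | x ∈ E μ} ≤ l
    have key : ∀ (x : M) (l : ℝ), x ∈ E l ↔ sInf {μ : ℝ | x ∈ E μ} ≤ l := by
      intro x l
      have hne : {μ : ℝ | x ∈ E μ}.Nonempty := by
        have : x ∈ ⋃ l : ℝ, E l := by rw [hunion]; trivial
        obtain ⟨_, ⟨μ, rfl⟩, hμ⟩ := this
        exact ⟨μ, hμ⟩
      have hbdd : BddBelow {μ : ℝ | x ∈ E μ} := by
        have : x ∉ ⋂ l : ℝ, E l := by rw [hinter]; exact Set.notMem_empty x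
        simp only [Set.mem_iInter, not_forall] at this
        obtain ⟨c, hc⟩ := this
        refine ⟨c, fun μ hμ => ?_⟩
        by_contra h
        exact hc (hmono (le_of_not_ge h) hμ)
      constructor
      · intro h; exact csInf_le hbdd h
      · intro h
        rw [hrc l]
        simp only [Set.mem_iInter, Set.mem_Ioi]
        intro μ hμ
        obtain ⟨ν, hν, hνμ⟩ := exists_lt_of_csInf_lt hne (lt_of_le_of_lt h hμ)
        exact hmono hνμ.le hν
    have hpre : ∀ l : ℝ, (fun x => sInf {μ : ℝ | x ∈ E μ}) ⁻¹' Set.Iic l = E l := by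
      intro l; ext x
      simp only [Set.mem_preimage, Set.mem_Iic]
      exact (key x l).symm
    refine ⟨measurable_of_Iic fun l => ?_, hpre⟩
    rw [hpre l]; exact hmeas l
end

section
/- Let M be a topological space and E : ℝ → 𝒯(M) a strongly regular spectral family, i.e. closure(E_λ) ⊆ E_μ whenever λ < μ. Then the admissible domain 𝒟(E) = M \ ⋂_λ E_λ is open (and dense) in M. -/
/-- The admissible domain of a strongly regular spectral family in
`𝒯(M)` is open and dense in `M`. -/
theorem admissible_domain_open_of_strongly_regular
    {M : Type*} [TopologicalSpace M] (E : ℝ → Set M)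
    (hopen : ∀ l : ℝ, IsOpen (E l))
    (hmono : Monotone E)
    (hright : ∀ l : ℝ, E l = interior (⋂ μ ∈ Set.Ioi l, E μ))
    (hbot : interior (⋂ l : ℝ, E l) = ∅)
    (htop : (⋃ l : ℝ, E l) = Set.univ)
    (hreg : ∀ l μ : ℝ, l < μ → closure (E l) ⊆ E μ) :
    IsOpen ((⋂ l : ℝ, E l)ᶜ) ∧ Dense ((⋂ l : ℝ, E l)ᶜ) := by
  have hEq : (⋂ l : ℝ, E l) = ⋂ l : ℝ, closure (E l) := by
    apply Set.Subset.antisymm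
    · exact Set.iInter_mono fun l => subset_closure
    · intro x hx
      simp only [Set.mem_iInter] at hx ⊢
      intro l
      exact hreg (l - 1) l (by linarith) (hx (l - 1))
  have hclosed : IsClosed (⋂ l : ℝ, E l) := by
    rw [hEq]; exact isClosed_iInter fun l => isClosed_closure
  refine ⟨hclosed.isOpen_compl, ?_⟩
  rw [← interior_eq_empty_iff_dense_compl]
  exact hbot
end

section
/- Let M be a topological space and f : M → ℝ continuous. Define E^f_λ := int(f⁻¹((-∞, λ])). Then E^f is a strongly regular spectral family in 𝒯(M): it is monotone, satisfies E^f_λ = int(⋂_{μ>λ} E^f_μ), int(⋂_λ E^f_λ) = ∅, ⋃_λ E^f_λ = M, and closure(E^f_λ) ⊆ E^f_μ for λ < μ. -/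
/-- For a continuous `f : M → ℝ`, the family
`E^f_λ := int(f⁻¹((-∞,λ]))` is a strongly regular spectral family in `𝒯(M)`. -/
theorem continuous_function_spectral_family
    {M : Type*} [TopologicalSpace M] (f : M → ℝ) (hf : Continuous f) :
    Monotone (fun l : ℝ => interior (f ⁻¹' Set.Iic l)) ∧
    (∀ l : ℝ, interior (f ⁻¹' Set.Iic l) =
      interior (⋂ μ ∈ Set.Ioi l, interior (f ⁻¹' Set.Iic μ))) ∧
    interior (⋂ l : ℝ, interior (f ⁻¹' Set.Iic l)) = ∅ ∧
    (⋃ l : ℝ, interior (f ⁻¹' Set.Iic l)) = Set.univ ∧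
    (∀ l μ : ℝ, l < μ →
      closure (interior (f ⁻¹' Set.Iic l)) ⊆ interior (f ⁻¹' Set.Iic μ)) := by
  have mono : Monotone (fun l : ℝ => interior (f ⁻¹' Set.Iic l)) := fun a b hab =>
    interior_mono (Set.preimage_mono (Set.Iic_subset_Iic.mpr hab))
  refine ⟨mono, ?_, ?_, ?_, ?_⟩
  · intro l
    apply subset_antisymm
    · apply subset_interior_iff.mpr
      exact ⟨interior (f ⁻¹' Set.Iic l), isOpen_interior, subset_rfl,
        Set.subset_iInter₂ fun μ hμ => mono (le_of_lt hμ)⟩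
    · apply interior_mono
      intro x hx
      simp only [Set.mem_iInter] at hx
      by_contra hc
      have hc' : l < f x := lt_of_not_ge fun h => hc h
      have h2 : x ∈ f ⁻¹' Set.Iic ((l + f x) / 2) :=
        interior_subset (hx _ (Set.mem_Ioi.mpr (by linarith)))
      simp only [Set.mem_preimage, Set.mem_Iic] at h2
      linarith
  · have h : (⋂ l : ℝ, interior (f ⁻¹' Set.Iic l)) = ∅ := by
      ext x
      simp only [Set.mem_iInter, Set.mem_empty_iff_false, iff_false, not_forall]
      exact ⟨f x - 1, fun hx => by
        have := interior_subset hx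
        simp at this; linarith⟩
    rw [h, interior_empty]
  · ext x
    simp only [Set.mem_iUnion, Set.mem_univ, iff_true]
    refine ⟨f x + 1, ?_⟩
    have : x ∈ f ⁻¹' Set.Iio (f x + 1) := by simp
    exact interior_maximal (fun y (hy : f y < f x + 1) => le_of_lt hy)
      (hf.isOpen_preimage _ isOpen_Iio) this
  · intro l μ hlμ
    calc closure (interior (f ⁻¹' Set.Iic l)) ⊆ closure (f ⁻¹' Set.Iic l) :=
          closure_mono interior_subset
      _ = f ⁻¹' Set.Iic l := (IsClosed.preimage hf isClosed_Iic).closure_eq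
      _ ⊆ f ⁻¹' Set.Iio μ := fun y hy => lt_of_le_of_lt hy hlμ
      _ ⊆ interior (f ⁻¹' Set.Iic μ) :=
          interior_maximal (fun y (hy : f y < μ) => le_of_lt hy)
            (hf.isOpen_preimage _ isOpen_Iio)
end

section
/- Let M be a topological space and f : M → ℝ continuous, with spectral family E^f_λ := int(f⁻¹((-∞, λ])). Then for every x ∈ M, inf { λ ∈ ℝ | x ∈ E^f_λ } = f(x); i.e., the function induced by E^f recovers f. -/
/-- The function induced by the spectral family
`E^f_λ = int(f⁻¹(-∞,λ]))` of a continuous function `f` recovers `f`. -/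
theorem continuous_function_induced_by_spectral_family
    {M : Type*} [TopologicalSpace M] (f : M → ℝ) (hf : Continuous f) :
    ∀ x : M, sInf {l : ℝ | x ∈ interior (f ⁻¹' Set.Iic l)} = f x := by
  intro x
  have hmem : ∀ l, f x < l → l ∈ {l : ℝ | x ∈ interior (f ⁻¹' Set.Iic l)} := by
    intro l hl
    have : x ∈ f ⁻¹' Set.Iio l := hl
    have h2 : x ∈ interior (f ⁻¹' Set.Iio l) := by
      rwa [(IsOpen.preimage hf isOpen_Iio).interior_eq]
    exact interior_mono (Set.preimage_mono Set.Iio_subset_Iic_self) h2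
  have hbdd : BddBelow {l : ℝ | x ∈ interior (f ⁻¹' Set.Iic l)} := by
    refine ⟨f x, fun l hl => ?_⟩
    have h3 : x ∈ interior (f ⁻¹' Set.Iic l) := hl
    exact Set.mem_Iic.mp (interior_subset h3 : x ∈ f ⁻¹' Set.Iic l)
  apply le_antisymm
  · refine le_of_forall_pos_le_add fun ε hε => ?_
    exact csInf_le hbdd (hmem _ (by linarith))
  · exact le_csInf ⟨f x + 1, hmem _ (by linarith)⟩ fun l hl => by
      have h3 : x ∈ interior (f ⁻¹' Set.Iic l) := hl
      exact Set.mem_Iic.mp (interior_subset h3 : x ∈ f ⁻¹' Set.Iic l)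
end

section
/- Let M be a topological space and E : ℝ → 𝒯(M) a strongly regular spectral family. Then the induced function f_E : 𝒟(E) → ℝ, f_E(x) := inf { λ | x ∈ E_λ }, is continuous on the admissible domain 𝒟(E) = M \ ⋂_λ E_λ. -/
/-!
Write `f x = sInf {l | x ∈ E l}`. Upper semicontinuity only needs the `E l` to be open: if
`f x < b`, then `x ∈ E l` for some `l < b`, and `f ≤ l` on the open set `E l`. Lower
semicontinuity is where strong regularity enters: if `a < c < c' < f x`, then `x ∉ E c'`, so
`x` lies outside `closure (E c) ⊆ E c'`, and `f ≥ c > a` on the open complement of `closure (E c)`.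
-/

open Filter Topology Set

section SpectralFamily

variable {α M : Type*} [ConditionallyCompleteLinearOrder α] {E : α → Set M} {x : M}

theorem Monotone.le_of_mem_of_notMem (hE : Monotone E) {a l : α} (hl : x ∈ E l)
    (ha : x ∉ E a) : a ≤ l :=
  le_of_not_gt fun hla => ha (hE hla.le hl)

theorem Monotone.bddBelow_setOf_mem (hE : Monotone E) (hx : x ∉ ⋂ l, E l) :
    BddBelow {l | x ∈ E l} := by
  obtain ⟨a, ha⟩ : ∃ a, x ∉ E a := by simpa using hx
  exact ⟨a, fun _ hl => hE.le_of_mem_of_notMem hl ha⟩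

variable [TopologicalSpace M]

theorem eventually_lt_sInf_setOf_mem [DenselyOrdered α] (hE : Monotone E)
    (hreg : ∀ l μ, l < μ → closure (E l) ⊆ E μ) (htop : ⋃ l, E l = univ)
    (hx : x ∉ ⋂ l, E l) {a : α} (ha : a < sInf {l | x ∈ E l}) :
    ∀ᶠ y in 𝓝 x, a < sInf {l | y ∈ E l} := by
  obtain ⟨c, hac, hc⟩ := exists_between ha
  obtain ⟨c', hcc', hc'⟩ := exists_between hc
  have hx_notMem : x ∉ closure (E c) := fun h =>
    notMem_of_lt_csInf hc' (hE.bddBelow_setOf_mem hx) (hreg c c' hcc' h)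
  filter_upwards [isClosed_closure.isOpen_compl.mem_nhds hx_notMem] with y hy
  have hyc : y ∉ E c := fun h => hy (subset_closure h)
  exact hac.trans_le <| le_csInf (iUnion_eq_univ_iff.1 htop y)
    fun _ hl => hE.le_of_mem_of_notMem hl hyc

theorem eventually_sInf_setOf_mem_lt (hE : Monotone E) (hopen : ∀ l, IsOpen (E l))
    (htop : ⋃ l, E l = univ) {b : α} (hb : sInf {l | x ∈ E l} < b) :
    ∀ᶠ y in 𝓝[(⋂ l, E l)ᶜ] x, sInf {l | y ∈ E l} < b := by
  obtain ⟨l, hxl, hlb⟩ := exists_lt_of_csInf_lt (iUnion_eq_univ_iff.1 htop x) hb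
  filter_upwards [mem_nhdsWithin_of_mem_nhds ((hopen l).mem_nhds hxl), self_mem_nhdsWithin]
    with y hyl hy
  exact (csInf_le (hE.bddBelow_setOf_mem hy) hyl).trans_lt hlb

theorem continuousOn_sInf_setOf_mem [TopologicalSpace α] [OrderTopology α] [DenselyOrdered α]
    (hE : Monotone E) (hopen : ∀ l, IsOpen (E l)) (htop : ⋃ l, E l = univ)
    (hreg : ∀ l μ, l < μ → closure (E l) ⊆ E μ) :
    ContinuousOn (fun x => sInf {l | x ∈ E l}) (⋂ l, E l)ᶜ := fun _ hx =>
  tendsto_order.2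
    ⟨fun _ ha => nhdsWithin_le_nhds (eventually_lt_sInf_setOf_mem hE hreg htop hx ha),
      fun _ hb => eventually_sInf_setOf_mem_lt hE hopen htop hb⟩

end SpectralFamily

theorem induced_function_continuousOn_admissible_domain_general
    {M : Type*} [TopologicalSpace M] (E : ℝ → Set M)
    (hopen : ∀ l : ℝ, IsOpen (E l))
    (hmono : Monotone E)
    (htop : (⋃ l : ℝ, E l) = Set.univ)
    (hreg : ∀ l μ : ℝ, l < μ → closure (E l) ⊆ E μ) :
    ContinuousOn (fun x => sInf {l : ℝ | x ∈ E l}) ((⋂ l : ℝ, E l)ᶜ) :=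
  continuousOn_sInf_setOf_mem hmono hopen htop hreg

/-- The function induced by a strongly regular spectral family `E` in
`𝒯(M)` is continuous on the admissible domain `𝒟(E) = M \ ⋂_λ E_λ`. -/
theorem induced_function_continuousOn_admissible_domain
    {M : Type*} [TopologicalSpace M] (E : ℝ → Set M)
    (hopen : ∀ l : ℝ, IsOpen (E l))
    (hmono : Monotone E)
    (hright : ∀ l : ℝ, E l = interior (⋂ μ ∈ Set.Ioi l, E μ))
    (hbot : interior (⋂ l : ℝ, E l) = ∅)
    (htop : (⋃ l : ℝ, E l) = Set.univ)
    (hreg : ∀ l μ : ℝ, l < μ → closure (E l) ⊆ E μ) :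
    ContinuousOn (fun x => sInf {l : ℝ | x ∈ E l}) ((⋂ l : ℝ, E l)ᶜ) :=
  induced_function_continuousOn_admissible_domain_general E hopen hmono htop hreg
end

section
/- Let M be a topological space, E : ℝ → 𝒯(M) a strongly regular spectral family, x ∈ 𝒟(E), and 𝔅 a quasipoint of 𝒯(M) over x (a maximal filter of nonempty open sets with x ∈ closure(U) for all U ∈ 𝔅). Then f_E(𝔅) := inf { λ | E_λ ∈ 𝔅 } equals f_E(x) := inf { λ | x ∈ E_λ }. -/
/-- A filter of nonempty open subsets of `M`. -/
def IsOpenFilter {M : Type*} [TopologicalSpace M] (B : Set (Set M)) : Prop :=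
  (∀ U ∈ B, IsOpen U ∧ U ≠ ∅) ∧
  (∀ U ∈ B, ∀ V ∈ B, U ∩ V ∈ B) ∧
  (∀ U ∈ B, ∀ V : Set M, IsOpen V → U ⊆ V → V ∈ B)

/-- A quasipoint of `𝒯(M)`: a maximal filter of nonempty open subsets of `M`. -/
def IsOpenQuasipoint {M : Type*} [TopologicalSpace M] (B : Set (Set M)) : Prop :=
  IsOpenFilter B ∧ ∀ B' : Set (Set M), IsOpenFilter B' → B ⊆ B' → B' = B

/-- For a strongly regular spectral family `E` in `𝒯(M)`,
`x ∈ 𝒟(E)` and a quasipoint `𝔅` over `x`, the value of the associated function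
at `𝔅` equals the value of the induced function at `x`:
`inf {λ | E_λ ∈ 𝔅} = inf {λ | x ∈ E_λ}`. -/
theorem associated_function_at_quasipoint_over_point
    {M : Type*} [TopologicalSpace M] (E : ℝ → Set M)
    (hopen : ∀ l : ℝ, IsOpen (E l))
    (hmono : Monotone E)
    (hright : ∀ l : ℝ, E l = interior (⋂ μ ∈ Set.Ioi l, E μ))
    (hbot : interior (⋂ l : ℝ, E l) = ∅)
    (htop : (⋃ l : ℝ, E l) = Set.univ)
    (hreg : ∀ l μ : ℝ, l < μ → closure (E l) ⊆ E μ)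
    (x : M) (hx : x ∈ (⋂ l : ℝ, E l)ᶜ)
    (B : Set (Set M)) (hB : IsOpenQuasipoint B)
    (hBx : ∀ U ∈ B, x ∈ closure U) :
    sInf {l : ℝ | E l ∈ B} = sInf {l : ℝ | x ∈ E l} := by
  obtain ⟨hBf, hBmax⟩ := hB
  obtain ⟨hne, hinter, hup⟩ := hBf
  -- univ ∈ B
  have huniv : Set.univ ∈ B := by
    have hBf' : IsOpenFilter (insert Set.univ B) := by
      refine ⟨?_, ?_, ?_⟩
      · rintro U (rfl | hU)
        · exact ⟨isOpen_univ, fun h => (h ▸ Set.mem_univ x : x ∈ (∅ : Set M))⟩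
        · exact hne U hU
      · rintro U (rfl | hU) V (rfl | hV)
        · simpa using Or.inl rfl
        · simpa using Or.inr hV
        · simpa using Or.inr hU
        · exact Or.inr (hinter U hU V hV)
      · rintro U (rfl | hU) V hVo hUV
        · exact Or.inl (Set.eq_univ_of_univ_subset hUV)
        · exact Or.inr (hup U hU V hVo hUV)
    have := hBmax _ hBf' (Set.subset_insert _ _)
    rw [← this]; exact Set.mem_insert _ _
  -- every open neighbourhood of x is in B
  have hnbhd : ∀ U : Set M, IsOpen U → x ∈ U → U ∈ B := by
    intro U hUo hxU
    set B' : Set (Set M) := {W | IsOpen W ∧ ∃ V ∈ B, U ∩ V ⊆ W} with hB'def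
    have hBf' : IsOpenFilter B' := by
      refine ⟨?_, ?_, ?_⟩
      · rintro W ⟨hWo, V, hV, hUVW⟩
        refine ⟨hWo, fun hWe => ?_⟩
        have hxcl := hBx V hV
        rw [mem_closure_iff] at hxcl
        obtain ⟨y, hy⟩ := hxcl U hUo hxU
        exact absurd (hUVW hy) (by simp [hWe])
      · rintro W1 ⟨hW1o, V1, hV1, h1⟩ W2 ⟨hW2o, V2, hV2, h2⟩
        refine ⟨hW1o.inter hW2o, V1 ∩ V2, hinter V1 hV1 V2 hV2, ?_⟩
        rintro y ⟨hyU, hyV1, hyV2⟩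
        exact ⟨h1 ⟨hyU, hyV1⟩, h2 ⟨hyU, hyV2⟩⟩
      · rintro W ⟨hWo, V, hV, h⟩ W' hW'o hWW'
        exact ⟨hW'o, V, hV, h.trans hWW'⟩
    have hsub : B ⊆ B' := fun V hV => ⟨(hne V hV).1, V, hV, Set.inter_subset_right⟩
    have : B' = B := hBmax _ hBf' hsub
    rw [← this]
    exact ⟨hUo, Set.univ, huniv, by simp⟩
  set S1 := {l : ℝ | E l ∈ B} with hS1def
  set S2 := {l : ℝ | x ∈ E l} with hS2def
  have h21 : S2 ⊆ S1 := fun l hl => hnbhd (E l) (hopen l) hl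
  have hS2ne : S2.Nonempty := by
    have : x ∈ ⋃ l : ℝ, E l := htop ▸ Set.mem_univ x
    obtain ⟨_, ⟨l, rfl⟩, hl⟩ := this
    exact ⟨l, hl⟩
  have hS1ne : S1.Nonempty := hS2ne.mono h21
  obtain ⟨l0, hl0⟩ : ∃ l0, x ∉ E l0 := by
    simpa [Set.mem_compl_iff, Set.mem_iInter] using hx
  have hbd2 : l0 ∈ lowerBounds S2 := by
    intro l hl
    by_contra h
    exact hl0 (hmono (le_of_not_ge h) hl)
  -- E l ∈ B implies x ∈ E μ for μ > l
  have hkey : ∀ l ∈ S1, ∀ μ, l < μ → μ ∈ S2 := by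
    intro l hl μ hlμ
    exact hreg l μ hlμ (hBx (E l) hl)
  have hbd1 : l0 ∈ lowerBounds S1 := by
    intro l hl
    by_contra h
    push_neg at h
    obtain ⟨μ, hμ1, hμ2⟩ := exists_between h
    exact absurd (hbd2 (hkey l hl μ hμ1)) (not_le.2 hμ2)
  have h1 : sInf S1 ≤ sInf S2 := csInf_le_csInf ⟨l0, hbd1⟩ hS2ne h21
  have h2 : sInf S2 ≤ sInf S1 := by
    apply le_csInf hS1ne
    intro l hl
    apply le_of_forall_pos_le_add
    intro ε hε
    exact csInf_le ⟨l0, hbd2⟩ (hkey l hl (l + ε) (by linarith))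
  exact le_antisymm h1 h2
end

section
/- Let 𝕃 be a complete lattice and E : ℝ² → 𝕃 a bounded complex (2-parameter) spectral family. Then E is decomposable: there exist spectral families E¹, E² : ℝ → 𝕃 with E_{λ,μ} = E¹_λ ∧ E²_μ for all λ, μ; explicitly, with b an upper bound (E_{λ,μ} = ⊤ for λ, μ ≥ b), one may take E¹_λ := E_{λ,b} and E²_μ := E_{b,μ}. -/
/-- Every bounded complex (2-parameter) spectral family in a complete
lattice is decomposable: `E_{λ,μ} = E¹_λ ⊓ E²_μ` where, with upper bound `b`,
`E¹_λ := E_{λ,b}` and `E²_μ := E_{b,μ}` are (one-parameter) spectral families. -/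
theorem bounded_complex_spectral_family_decomposable
    {L : Type*} [CompleteLattice L] (E : ℝ → ℝ → L) (m b : ℝ)
    (h1 : ∀ l1 l2 m1 m2 : ℝ,
      E l1 l2 ⊓ E m1 m2 = E (min l1 m1) (min l2 m2))
    (h2 : ∀ l1 l2 : ℝ,
      (⨅ m1 ∈ Set.Ioi l1, ⨅ m2 ∈ Set.Ioi l2, E m1 m2) = E l1 l2)
    (h3a : ∀ μ : ℝ, (⨅ l : ℝ, E l μ) = ⊥)
    (h3b : ∀ l : ℝ, (⨅ μ : ℝ, E l μ) = ⊥)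
    (h3c : (⨆ l : ℝ, ⨆ μ : ℝ, E l μ) = ⊤)
    (hm : ∀ l1 l2 : ℝ, (l1 ≤ m ∨ l2 ≤ m) → E l1 l2 = ⊥)
    (hb : ∀ l1 l2 : ℝ, b ≤ l1 → b ≤ l2 → E l1 l2 = ⊤) :
    ∃ E1 E2 : ℝ → L,
      (Monotone E1 ∧ (∀ l : ℝ, (⨅ μ ∈ Set.Ioi l, E1 μ) = E1 l) ∧
        (⨅ l : ℝ, E1 l) = ⊥ ∧ (⨆ l : ℝ, E1 l) = ⊤) ∧
      (Monotone E2 ∧ (∀ l : ℝ, (⨅ μ ∈ Set.Ioi l, E2 μ) = E2 l) ∧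
        (⨅ l : ℝ, E2 l) = ⊥ ∧ (⨆ l : ℝ, E2 l) = ⊤) ∧
      (∀ l μ : ℝ, E l μ = E1 l ⊓ E2 μ) ∧
      E1 = (fun l => E l b) ∧ E2 = (fun μ => E b μ) := by
  have hbb : E b b = ⊤ := hb b b le_rfl le_rfl
  -- monotonicity in each argument
  have mono1 : ∀ l l' μ : ℝ, l ≤ l' → E l μ ≤ E l' μ := by
    intro l l' μ h
    have := h1 l μ l' μ
    rw [min_eq_left h, min_self] at this
    exact inf_eq_left.mp this
  have mono2 : ∀ l μ μ' : ℝ, μ ≤ μ' → E l μ ≤ E l μ' := by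
    intro l μ μ' h
    have := h1 l μ l μ'
    rw [min_eq_left h, min_self] at this
    exact inf_eq_left.mp this
  refine ⟨fun l => E l b, fun μ => E b μ, ⟨?_, ?_, ?_, ?_⟩, ⟨?_, ?_, ?_, ?_⟩, ?_, rfl, rfl⟩
  · intro l l' h; exact mono1 l l' b h
  · intro l
    apply le_antisymm
    · show (⨅ μ ∈ Set.Ioi l, E μ b) ≤ E l b
      rw [← h2 l b]
      refine le_iInf₂ fun m1 hm1 => le_iInf₂ fun m2 hm2 => ?_
      exact le_trans (iInf₂_le m1 hm1) (mono2 m1 b m2 (le_of_lt hm2))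
    · exact le_iInf₂ fun m1 hm1 => mono1 l m1 b (le_of_lt hm1)
  · exact h3a b
  · apply le_antisymm le_top
    exact le_trans (le_of_eq hbb.symm) (le_iSup (fun l => E l b) b)
  · intro μ μ' h; exact mono2 b μ μ' h
  · intro l
    apply le_antisymm
    · show (⨅ μ ∈ Set.Ioi l, E b μ) ≤ E b l
      rw [← h2 b l]
      refine le_iInf₂ fun m1 hm1 => le_iInf₂ fun m2 hm2 => ?_
      exact le_trans (iInf₂_le m2 hm2) (mono1 b m1 m2 (le_of_lt hm1))
    · exact le_iInf₂ fun m1 hm1 => mono2 b l m1 (le_of_lt hm1)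
  · exact h3b b
  · apply le_antisymm le_top
    exact le_trans (le_of_eq hbb.symm) (le_iSup (fun μ => E b μ) b)
  · intro l μ
    have key : E l μ = E (min l b) (min μ b) := by
      have := h1 l μ b b
      rw [hbb, inf_top_eq] at this
      exact this
    have := h1 l b b μ
    rw [min_comm b μ] at this
    rw [this, ← key]
end
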